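/- Let N ≥ 3, 2 < p < 2N/(N-2), ρ > 0, and let K_* be as above (bounded away from a neighborhood of 0, with v ↦ K_*^{1/p}v compact from H¹ to L^p_loc). If {u_n} is bounded in H¹(ℝ^N) and sup_{y ∈ ℝ^N} ∫_{B(y,ρ)} |u_n|² dx → 0 as n → ∞, then ∫_{ℝ^N} K_*(x)|u_n|^p dx → 0. -/

import Mathlib

/-!
Lions' argument. With `q = 2N/(N-2)`, a cutoff and the Gagliardo–Nirenberg–Sobolev inequality
bound `∫_{B(y,ρ)} |u|^q` by a power of the `H¹` energy on `B(y,3ρ)`; interpolating between `L²`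
and `L^q` gives `∫_{B(y,ρ)} |u|^p ≤ C s^α E^{p/2-α-1} ∫_{B(y,3ρ)} (|∇u|² + u²)`, where `s` bounds
the `L²` mass of `u` on balls of radius `ρ` and `E` its energy. Integrating over all centres `y`
(Tonelli and translation invariance, instead of a covering by balls of bounded overlap) yields
`∫ |u|^p ≤ C s^α E^{p/2-α}`, so `u_n → 0` in `L^p`. The weighted integral is split at
`|x| = δ`: inside, it is uniformly small by the compactness hypothesis applied to `u_n` rescaled
to unit energy; outside, `K_*` is bounded.
-/

open MeasureTheory Filter Set Function Metric
open scoped Topology ENNReal NNReal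

theorem HasCompactSupport.enorm_le_lintegral_enorm_deriv {F : Type*} [NormedAddCommGroup F]
    [NormedSpace ℝ F] [CompleteSpace F] {f : ℝ → F} (hf : Differentiable ℝ f)
    (h'f : HasCompactSupport f) (x : ℝ) :
    ‖f x‖ₑ ≤ ∫⁻ y, ‖deriv f y‖ₑ := by
  by_cases hfin : ∫⁻ y in Iic x, ‖deriv f y‖ₑ = ∞
  · exact (hfin ▸ le_top).trans (setLIntegral_le_lintegral _ _)
  have hint : IntegrableOn (deriv f) (Iic x) :=
    ⟨aestronglyMeasurable_deriv f _, lt_top_iff_ne_top.2 hfin⟩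
  have hlim : Tendsto f atBot (𝓝 0) := h'f.is_zero_at_infty.mono_left atBot_le_cocompact
  calc ‖f x‖ₑ = ‖∫ y in Iic x, deriv f y‖ₑ := by
        rw [integral_Iic_of_hasDerivAt_of_tendsto (hf x).continuousAt.continuousWithinAt
          (fun y _ => (hf y).hasDerivAt) hint hlim, sub_zero]
    _ ≤ ∫⁻ y in Iic x, ‖deriv f y‖ₑ := enorm_integral_le_lintegral_enorm _
    _ ≤ ∫⁻ y, ‖deriv f y‖ₑ := setLIntegral_le_lintegral _ _

theorem enorm_le_lintegral_enorm_fderiv_update {ι F : Type*} [Fintype ι] [DecidableEq ι]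
    [NormedAddCommGroup F] [NormedSpace ℝ F] [CompleteSpace F] {u : EuclideanSpace ℝ ι → F}
    (hu : Differentiable ℝ u) (h2u : HasCompactSupport u) (y : ι → ℝ) (i : ι) :
    ‖u (WithLp.toLp 2 y)‖ₑ ≤ ∫⁻ t, ‖fderiv ℝ u (WithLp.toLp 2 (update y i t))‖ₑ := by
  have hline : ∀ t, HasDerivAt (fun t => u (WithLp.toLp 2 (update y i t)))
      (fderiv ℝ u (WithLp.toLp 2 (update y i t)) (EuclideanSpace.single i 1)) t := fun t =>
    (hu _).hasFDerivAt.comp_hasDerivAt t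
      ((PiLp.continuousLinearEquiv 2 ℝ (fun _ : ι => ℝ)).symm.hasFDerivAt.comp_hasDerivAt t
        (hasDerivAt_update y i t))
  calc ‖u (WithLp.toLp 2 y)‖ₑ = ‖u (WithLp.toLp 2 (update y i (y i)))‖ₑ := by
        rw [update_eq_self]
    _ ≤ ∫⁻ t, ‖deriv (fun t => u (WithLp.toLp 2 (update y i t))) t‖ₑ :=
      HasCompactSupport.enorm_le_lintegral_enorm_deriv (fun t => (hline t).differentiableAt)
        (h2u.comp_isClosedEmbedding ((PiLp.homeomorph 2 _).symm.isClosedEmbedding.comp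
          (isClosedEmbedding_update y i))) _
    _ ≤ ∫⁻ t, ‖fderiv ℝ u (WithLp.toLp 2 (update y i t))‖ₑ := by
      gcongr with t
      rw [(hline t).deriv]
      refine (ContinuousLinearMap.le_opENorm _ _).trans_eq ?_
      simp [enorm_eq_nnnorm]

/-- Mathlib's `lintegral_pow_le_pow_lintegral_fderiv` assumes `C¹`; here `u` is only
differentiable. In the orthonormal coordinates of `EuclideanSpace` the constant is `1`. -/
theorem lintegral_pow_le_pow_lintegral_fderiv_of_differentiable {ι F : Type*} [Fintype ι]
    [NormedAddCommGroup F] [NormedSpace ℝ F] [CompleteSpace F]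
    {p : ℝ} (hp : Real.HolderConjugate (Fintype.card ι) p) {u : EuclideanSpace ℝ ι → F}
    (hu : Differentiable ℝ u) (h2u : HasCompactSupport u) :
    ∫⁻ x, ‖u x‖ₑ ^ p ≤ (∫⁻ x, ‖fderiv ℝ u x‖ₑ) ^ p := by
  classical
  have htoLp := PiLp.volume_preserving_toLp ι
  have hemb := (MeasurableEquiv.toLp 2 (ι → ℝ)).measurableEmbedding
  set g : (ι → ℝ) → ℝ≥0∞ := fun y => ‖fderiv ℝ u (WithLp.toLp 2 y)‖ₑ
  have hg : Measurable g :=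
    (measurable_fderiv ℝ u).enorm.comp (PiLp.continuous_toLp 2 _).measurable
  have hn : (1 : ℝ) < Fintype.card ι := by exact_mod_cast hp.lt
  calc ∫⁻ x, ‖u x‖ₑ ^ p = ∫⁻ y, ‖u (WithLp.toLp 2 y)‖ₑ ^ p :=
        (htoLp.lintegral_comp_emb hemb _).symm
    _ = ∫⁻ y, ∏ _i : ι, ‖u (WithLp.toLp 2 y)‖ₑ ^ (1 / (Fintype.card ι - 1 : ℝ)) := by
        congr! 2 with y
        rw [Finset.prod_const, Finset.card_univ, ← ENNReal.rpow_natCast, ← ENNReal.rpow_mul,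
          hp.conjugate_eq]
        field_simp [show (Fintype.card ι : ℝ) - 1 ≠ 0 by linarith]
    _ ≤ ∫⁻ y, ∏ i, (∫⁻ t, g (update y i t)) ^ (1 / (Fintype.card ι - 1 : ℝ)) := by
        gcongr with y i
        exact enorm_le_lintegral_enorm_fderiv_update hu h2u y i
    _ ≤ (∫⁻ y, g y) ^ p := lintegral_prod_lintegral_pow_le _ hp hg
    _ = (∫⁻ x, ‖fderiv ℝ u x‖ₑ) ^ p := by rw [← htoLp.lintegral_comp_emb hemb]

theorem lintegral_enorm_fderiv_norm_rpow_le {E F : Type*} [NormedAddCommGroup E]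
    [NormedSpace ℝ E] [MeasurableSpace E] [OpensMeasurableSpace E] [NormedAddCommGroup F]
    [InnerProductSpace ℝ F] [CompleteSpace F] (μ : Measure E) {u : E → F}
    (hu : Differentiable ℝ u) {γ : ℝ≥0} (hγ : 1 < γ) {p q : ℝ} (hpq : p.HolderConjugate q) :
    ∫⁻ x, ‖fderiv ℝ (fun x => ‖u x‖ ^ (γ : ℝ)) x‖ₑ ∂μ ≤
      γ * ((∫⁻ x, ‖u x‖ₑ ^ (((γ : ℝ) - 1) * q) ∂μ) ^ (1 / q) *
        (∫⁻ x, ‖fderiv ℝ u x‖ₑ ^ p ∂μ) ^ (1 / p)) := by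
  have hu_meas : Measurable fun x => ‖u x‖ₑ := hu.continuous.enorm.measurable
  calc ∫⁻ x, ‖fderiv ℝ (fun x => ‖u x‖ ^ (γ : ℝ)) x‖ₑ ∂μ
      ≤ ∫⁻ x, γ * (‖u x‖ₑ ^ ((γ : ℝ) - 1) * ‖fderiv ℝ u x‖ₑ) ∂μ := by
        gcongr with x
        rw [← mul_assoc]
        exact enorm_fderiv_norm_rpow_le hu hγ
    _ = γ * ∫⁻ x, ‖u x‖ₑ ^ ((γ : ℝ) - 1) * ‖fderiv ℝ u x‖ₑ ∂μ :=
        lintegral_const_mul _ ((hu_meas.pow_const _).mul (measurable_fderiv ℝ u).enorm)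
    _ ≤ _ := by
        gcongr
        refine (ENNReal.lintegral_mul_le_Lp_mul_Lq _ hpq.symm (hu_meas.pow_const _).aemeasurable
          (measurable_fderiv ℝ u).enorm.aemeasurable).trans_eq ?_
        simp_rw [← ENNReal.rpow_mul]

theorem ENNReal.rpow_le_of_rpow_add_le_mul_rpow {x c : ℝ≥0∞} {a b : ℝ} (ha : 0 < a)
    (hx : x ≠ ∞) (h : x ^ (a + b) ≤ c * x ^ b) : x ^ a ≤ c := by
  rcases eq_or_ne x 0 with rfl | hx0
  · simp [ENNReal.zero_rpow_of_pos ha]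
  rw [ENNReal.rpow_add _ _ hx0 hx] at h
  exact (ENNReal.mul_le_mul_iff_left (ENNReal.rpow_pos (pos_iff_ne_zero.2 hx0) hx).ne'
    (ENNReal.rpow_ne_top_of_ne_zero hx0 hx)).1 h

/-- Obtained from the case `p = 1` applied to `‖u‖ ^ γ` with `γ = p (n - 1) / (n - p)`. -/
theorem eLpNorm_le_eLpNorm_fderiv_of_eq_of_differentiable {ι F : Type*} [Fintype ι]
    [Nonempty ι] [NormedAddCommGroup F] [InnerProductSpace ℝ F] [CompleteSpace F]
    {u : EuclideanSpace ℝ ι → F} (hu : Differentiable ℝ u) (h2u : HasCompactSupport u)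
    {p p' : ℝ≥0} (hp : 1 < p) (hp' : (p' : ℝ)⁻¹ = (p : ℝ)⁻¹ - (Fintype.card ι : ℝ)⁻¹) :
    eLpNorm u p' volume ≤
      ENNReal.ofReal (p * (Fintype.card ι - 1) / (Fintype.card ι - p)) *
        eLpNorm (fderiv ℝ u) p volume := by
  rcases eq_or_ne p' 0 with rfl | hp'0
  · simp
  set n : ℝ := (Fintype.card ι : ℝ)
  have hp1 : (1 : ℝ) < p := hp
  have hpn : (p : ℝ) < n := by
    have : 0 < (p : ℝ)⁻¹ - n⁻¹ := hp' ▸ inv_pos.2 (NNReal.coe_pos.2 (pos_iff_ne_zero.2 hp'0))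
    rwa [sub_pos, inv_lt_inv₀ (by simp [n, Fintype.card_pos]) (by linarith)] at this
  have hp'n : (p' : ℝ) = n * p / (n - p) := by
    rw [← inv_inv (p' : ℝ), hp', inv_sub_inv (by linarith) (by linarith), inv_div, mul_comm]
  set γ : ℝ≥0 := ⟨p * (n - 1) / (n - p), div_nonneg (by nlinarith) (by linarith)⟩
  have hγ : (γ : ℝ) = p * (n - 1) / (n - p) := rfl
  have hγ1 : 1 < γ := by
    rw [← NNReal.coe_lt_coe, hγ, NNReal.coe_one, one_lt_div (by linarith)]
    nlinarith
  set r : ℝ := n / (n - 1)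
  set q : ℝ := p / (p - 1)
  have hr : Real.HolderConjugate n r := .conjExponent (hp1.trans hpn)
  have hq : Real.HolderConjugate p q := .conjExponent hp1
  have hγr : (γ : ℝ) * r = p' := by
    rw [hγ, hp'n, show r = n / (n - 1) from rfl]
    field_simp [show n - 1 ≠ 0 by linarith]
  have hγq : ((γ : ℝ) - 1) * q = p' := by
    rw [hγ, hp'n, show q = p / (p - 1) from rfl]
    field_simp [show n - p ≠ 0 by linarith, show (p : ℝ) - 1 ≠ 0 by linarith]
    ring
  have hrq : 1 / r = 1 / (p' : ℝ) + 1 / q := by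
    rw [hp'n, show r = n / (n - 1) from rfl, show q = p / (p - 1) from rfl]
    field_simp [show n - 1 ≠ 0 by linarith, show (p : ℝ) - 1 ≠ 0 by linarith,
      show n ≠ 0 by linarith]
    ring
  set I := ∫⁻ x, ‖u x‖ₑ ^ (p' : ℝ)
  set J := ∫⁻ x, ‖fderiv ℝ u x‖ₑ ^ (p : ℝ)
  have hkey : I ^ (1 / r) ≤ γ * (I ^ (1 / q) * J ^ (1 / (p : ℝ))) := by
    have hI : I = ∫⁻ x, ‖‖u x‖ ^ (γ : ℝ)‖ₑ ^ r := by
      simp_rw [Real.enorm_rpow_of_nonneg (norm_nonneg _) γ.coe_nonneg, enorm_norm,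
        ← ENNReal.rpow_mul, hγr, I]
    calc I ^ (1 / r) ≤ ∫⁻ x, ‖fderiv ℝ (fun x => ‖u x‖ ^ (γ : ℝ)) x‖ₑ := by
          rw [hI, one_div, ENNReal.rpow_inv_le_iff hr.symm.pos]
          exact lintegral_pow_le_pow_lintegral_fderiv_of_differentiable hr (hu.norm_rpow hγ1)
            (h2u.norm.rpow_const (by positivity))
      _ ≤ γ * (I ^ (1 / q) * J ^ (1 / (p : ℝ))) := by
          simpa only [hγq] using lintegral_enorm_fderiv_norm_rpow_le volume hu hγ1 hq
  rw [eLpNorm_nnreal_eq_lintegral hp'0, eLpNorm_nnreal_eq_lintegral (zero_lt_one.trans hp).ne',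
    ← hγ, ENNReal.ofReal_coe_nnreal]
  change I ^ (1 / (p' : ℝ)) ≤ γ * J ^ (1 / (p : ℝ))
  exact ENNReal.rpow_le_of_rpow_add_le_mul_rpow (by positivity)
    (lintegral_rpow_enorm_lt_top_of_eLpNorm_lt_top (by simpa using hp'0) ENNReal.coe_ne_top
      (hu.continuous.memLp_of_hasCompactSupport h2u).eLpNorm_lt_top).ne
    (hrq ▸ hkey.trans_eq (by ring))

/-- `|∇w|² + |w|²`, the density of the squared `H¹` norm. -/
noncomputable def h1Density {E F : Type*} [NormedAddCommGroup E] [NormedSpace ℝ E]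
    [NormedAddCommGroup F] [NormedSpace ℝ F] (w : E → F) (x : E) : ℝ≥0∞ :=
  ‖fderiv ℝ w x‖ₑ ^ 2 + ‖w x‖ₑ ^ 2

theorem measurable_h1Density {E : Type*} [NormedAddCommGroup E] [NormedSpace ℝ E]
    [MeasurableSpace E] [OpensMeasurableSpace E] {w : E → ℝ} (hw : Continuous w) :
    Measurable (h1Density w) :=
  ((measurable_fderiv ℝ w).enorm.pow_const 2).add (hw.enorm.measurable.pow_const 2)

theorem enorm_fderiv_mul_sq_le {E : Type*} [NormedAddCommGroup E] [NormedSpace ℝ E]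
    {χ w : E → ℝ} {x : E} (hχ : DifferentiableAt ℝ χ x) (hw : DifferentiableAt ℝ w x)
    (hχ1 : ‖χ x‖ₑ ≤ 1) {L : ℝ≥0∞} (hL : ‖fderiv ℝ χ x‖ₑ ≤ L) :
    ‖fderiv ℝ (fun y => χ y * w y) x‖ₑ ^ 2 ≤ (1 + L) ^ 2 * h1Density w x := by
  set m := max ‖fderiv ℝ w x‖ₑ ‖w x‖ₑ
  have hbound : ‖fderiv ℝ (fun y => χ y * w y) x‖ₑ ≤ (1 + L) * m := by
    rw [fderiv_fun_mul hχ hw, add_mul, one_mul]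
    refine (enorm_add_le (χ x • fderiv ℝ w x) (w x • fderiv ℝ χ x)).trans (add_le_add ?_ ?_)
    · rw [enorm_smul]
      exact (mul_le_of_le_one_left zero_le hχ1).trans (le_max_left _ _)
    · rw [enorm_smul, mul_comm]
      exact mul_le_mul' hL (le_max_right _ _)
  calc ‖fderiv ℝ (fun y => χ y * w y) x‖ₑ ^ 2 ≤ ((1 + L) * m) ^ 2 := pow_le_pow_left' hbound 2
    _ ≤ (1 + L) ^ 2 * h1Density w x := by
      rw [mul_pow, h1Density]
      gcongr
      rcases le_total ‖fderiv ℝ w x‖ₑ ‖w x‖ₑ with h | h <;> simp [m, h]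

theorem lintegral_enorm_fderiv_mul_sq_le {E : Type*} [NormedAddCommGroup E] [NormedSpace ℝ E]
    [MeasurableSpace E] [OpensMeasurableSpace E] (μ : Measure E) {χ w : E → ℝ}
    (hχ : Differentiable ℝ χ) (hw : Differentiable ℝ w) (hχ1 : ∀ x, ‖χ x‖ₑ ≤ 1) {L : ℝ≥0∞}
    (hL : ∀ x, ‖fderiv ℝ χ x‖ₑ ≤ L) {s : Set E} (hs : MeasurableSet s) (hχs : tsupport χ ⊆ s) :
    ∫⁻ x, ‖fderiv ℝ (fun y => χ y * w y) x‖ₑ ^ 2 ∂μ ≤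
      (1 + L) ^ 2 * ∫⁻ x in s, h1Density w x ∂μ := by
  have hpt : ∀ x, ‖fderiv ℝ (fun y => χ y * w y) x‖ₑ ^ 2 ≤
      s.indicator (fun x => (1 + L) ^ 2 * h1Density w x) x := by
    intro x
    by_cases hx : x ∈ s
    · rw [indicator_of_mem hx]
      exact enorm_fderiv_mul_sq_le (hχ x) (hw x) (hχ1 x) (hL x)
    · have : x ∉ support (fderiv ℝ fun y => χ y * w y) := fun h =>
        hx (hχs (tsupport_mul_subset_left (support_fderiv_subset ℝ h)))
      rw [notMem_support.1 this, indicator_of_notMem hx, ← ofReal_norm, norm_zero]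
      simp
  calc ∫⁻ x, ‖fderiv ℝ (fun y => χ y * w y) x‖ₑ ^ 2 ∂μ
      ≤ ∫⁻ x, s.indicator (fun x => (1 + L) ^ 2 * h1Density w x) x ∂μ := lintegral_mono hpt
    _ = (1 + L) ^ 2 * ∫⁻ x in s, h1Density w x ∂μ := by
      rw [lintegral_indicator hs, lintegral_const_mul _ (measurable_h1Density hw.continuous)]

theorem exists_cutoff_ball {E : Type*} [NormedAddCommGroup E] [NormedSpace ℝ E]
    [FiniteDimensional ℝ E] {ρ : ℝ} (hρ : 0 < ρ) :
    ∃ L : ℝ≥0∞, L ≠ ∞ ∧ ∀ c : E, ∃ χ : E → ℝ, Differentiable ℝ χ ∧ (∀ x, ‖χ x‖ₑ ≤ 1) ∧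
      (∀ x, ‖fderiv ℝ χ x‖ₑ ≤ L) ∧ EqOn χ 1 (ball c ρ) ∧ tsupport χ ⊆ closedBall c (2 * ρ) := by
  let φ : ContDiffBump (0 : E) := ⟨ρ, 2 * ρ, hρ, by linarith⟩
  have hφ : Differentiable ℝ φ := (φ.contDiff (n := 1)).differentiable one_ne_zero
  obtain ⟨L, hL⟩ := ((φ.contDiff (n := 1)).continuous_fderiv one_ne_zero
    ).bounded_above_of_compact_support (φ.hasCompactSupport.fderiv ℝ)
  refine ⟨ENNReal.ofReal L, ENNReal.ofReal_ne_top, fun c => ⟨fun x => φ (x - c),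
    hφ.comp (differentiable_id.sub_const c), fun x => ?_, fun x => ?_, fun x hx => ?_, ?_⟩⟩
  · simpa [Real.enorm_eq_ofReal φ.nonneg] using φ.le_one
  · rw [fderiv_comp_sub c, ← ofReal_norm]
    exact ENNReal.ofReal_le_ofReal (hL _)
  · exact φ.one_of_mem_closedBall (by simpa [dist_eq_norm] using (mem_ball.1 hx).le)
  · refine closure_minimal (fun x hx => ?_) isClosed_closedBall
    have : x - c ∈ ball 0 (2 * ρ) := φ.support_eq ▸ hx
    simpa [dist_eq_norm] using (mem_ball.1 this).le

theorem lintegral_rpow_le_lintegral_fderiv_sq_rpow {ι F : Type*} [Fintype ι]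
    (hι : 2 < Fintype.card ι) [NormedAddCommGroup F] [InnerProductSpace ℝ F] [CompleteSpace F]
    {q : ℝ≥0} (hq : (q : ℝ)⁻¹ = 2⁻¹ - (Fintype.card ι : ℝ)⁻¹) {u : EuclideanSpace ℝ ι → F}
    (hu : Differentiable ℝ u) (h2u : HasCompactSupport u) :
    ∫⁻ x, ‖u x‖ₑ ^ (q : ℝ) ≤
      ENNReal.ofReal (2 * (Fintype.card ι - 1) / (Fintype.card ι - 2)) ^ (q : ℝ) *
        (∫⁻ x, ‖fderiv ℝ u x‖ₑ ^ 2) ^ ((q : ℝ) / 2) := by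
  have : Nonempty ι := Fintype.card_pos_iff.1 (by omega)
  have hq0 : q ≠ 0 := by
    rintro rfl
    have : (Fintype.card ι : ℝ)⁻¹ < 2⁻¹ := inv_strictAnti₀ two_pos (by exact_mod_cast hι)
    simp at hq
    linarith
  have hsob := eLpNorm_le_eLpNorm_fderiv_of_eq_of_differentiable hu h2u (p := 2) one_lt_two hq
  have h2 : eLpNorm (fderiv ℝ u) (2 : ℝ≥0) volume ^ (2 : ℝ) = ∫⁻ x, ‖fderiv ℝ u x‖ₑ ^ 2 := by
    simpa using eLpNorm_nnreal_pow_eq_lintegral (f := fderiv ℝ u) (μ := volume) two_ne_zero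
  rw [← eLpNorm_nnreal_pow_eq_lintegral hq0, ← h2, ← ENNReal.rpow_mul,
    mul_div_cancel₀ _ two_ne_zero, ← ENNReal.mul_rpow_of_nonneg _ _ q.coe_nonneg]
  gcongr
  simpa using hsob

theorem exists_setLIntegral_ball_rpow_le_h1Density {ι : Type*} [Fintype ι]
    (hι : 2 < Fintype.card ι) {q : ℝ≥0} (hq : (q : ℝ)⁻¹ = 2⁻¹ - (Fintype.card ι : ℝ)⁻¹)
    {ρ : ℝ} (hρ : 0 < ρ) :
    ∃ C : ℝ≥0∞, C ≠ ∞ ∧ ∀ w : EuclideanSpace ℝ ι → ℝ, Differentiable ℝ w → ∀ c,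
      ∫⁻ x in ball c ρ, ‖w x‖ₑ ^ (q : ℝ) ≤
        C * (∫⁻ x in ball c (3 * ρ), h1Density w x) ^ ((q : ℝ) / 2) := by
  obtain ⟨L, hL, hcut⟩ := exists_cutoff_ball (E := EuclideanSpace ℝ ι) hρ
  set S := ENNReal.ofReal (2 * (Fintype.card ι - 1) / (Fintype.card ι - 2))
  refine ⟨S ^ (q : ℝ) * ((1 + L) ^ 2) ^ ((q : ℝ) / 2), by finiteness, fun w hw c => ?_⟩
  obtain ⟨χ, hχ, hχ1, hχL, hχc, hχs⟩ := hcut c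
  have h2g : HasCompactSupport fun x => χ x * w x :=
    (HasCompactSupport.intro' (isCompact_closedBall c (2 * ρ)) isClosed_closedBall
      fun x hx => image_eq_zero_of_notMem_tsupport (fun h => hx (hχs h))).mul_right
  calc ∫⁻ x in ball c ρ, ‖w x‖ₑ ^ (q : ℝ) = ∫⁻ x in ball c ρ, ‖χ x * w x‖ₑ ^ (q : ℝ) :=
        setLIntegral_congr_fun measurableSet_ball fun x hx => by simp [hχc hx]
    _ ≤ ∫⁻ x, ‖χ x * w x‖ₑ ^ (q : ℝ) := setLIntegral_le_lintegral _ _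
    _ ≤ S ^ (q : ℝ) * (∫⁻ x, ‖fderiv ℝ (fun y => χ y * w y) x‖ₑ ^ 2) ^ ((q : ℝ) / 2) :=
        lintegral_rpow_le_lintegral_fderiv_sq_rpow hι hq (hχ.mul hw) h2g
    _ ≤ S ^ (q : ℝ) * ((1 + L) ^ 2 * ∫⁻ x in ball c (3 * ρ), h1Density w x) ^ ((q : ℝ) / 2) := by
        gcongr
        refine (lintegral_enorm_fderiv_mul_sq_le volume hχ hw hχ1 hχL measurableSet_closedBall
          hχs).trans ?_
        gcongr
        exact closedBall_subset_ball (by linarith)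
    _ = _ := by rw [ENNReal.mul_rpow_of_nonneg _ _ (by positivity), mul_assoc]

theorem lintegral_rpow_le_interpolate {α : Type*} [MeasurableSpace α] {μ : Measure α}
    {f : α → ℝ≥0∞} (hf : AEMeasurable f μ) {r p q : ℝ} (hr : 0 ≤ r) (hrp : r ≤ p) (hpq : p ≤ q)
    (hrq : r < q) :
    ∫⁻ x, f x ^ p ∂μ ≤
      (∫⁻ x, f x ^ r ∂μ) ^ ((q - p) / (q - r)) * (∫⁻ x, f x ^ q ∂μ) ^ ((p - r) / (q - r)) := by
  have hqr : 0 < q - r := sub_pos.2 hrq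
  have hsplit : ∀ x,
      f x ^ p = (f x ^ r) ^ ((q - p) / (q - r)) * (f x ^ q) ^ ((p - r) / (q - r)) := by
    intro x
    rw [← ENNReal.rpow_mul, ← ENNReal.rpow_mul, ← ENNReal.rpow_add_of_nonneg _ _
      (mul_nonneg hr (div_nonneg (by linarith) hqr.le))
      (mul_nonneg (by linarith) (div_nonneg (by linarith) hqr.le))]
    congr 1
    field_simp
    ring
  simp_rw [hsplit]
  exact ENNReal.lintegral_mul_norm_pow_le (hf.pow_const r) (hf.pow_const q)
    (div_nonneg (by linarith) hqr.le) (div_nonneg (by linarith) hqr.le) (by field_simp; ring)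

theorem measurable_uncurry_indicator_ball {E : Type*} [PseudoMetricSpace E]
    [SecondCountableTopology E] [MeasurableSpace E] [OpensMeasurableSpace E] {f : E → ℝ≥0∞}
    (hf : Measurable f) (r : ℝ) : Measurable (uncurry fun y x => (ball y r).indicator f x) :=
  (hf.comp measurable_snd).indicator <|
    measurableSet_lt (continuous_snd.dist continuous_fst).measurable measurable_const

theorem measurable_setLIntegral_ball {E : Type*} [PseudoMetricSpace E]
    [SecondCountableTopology E] [MeasurableSpace E] [OpensMeasurableSpace E] (μ : Measure E)
    [SFinite μ] {f : E → ℝ≥0∞} (hf : Measurable f) (r : ℝ) :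
    Measurable fun y => ∫⁻ x in ball y r, f x ∂μ := by
  simp_rw [← lintegral_indicator measurableSet_ball]
  exact (measurable_uncurry_indicator_ball hf r).lintegral_prod_right'

theorem lintegral_setLIntegral_ball {E : Type*} [NormedAddCommGroup E] [NormedSpace ℝ E]
    [FiniteDimensional ℝ E] [MeasurableSpace E] [BorelSpace E] (μ : Measure E)
    [μ.IsAddHaarMeasure] {f : E → ℝ≥0∞} (hf : Measurable f) (r : ℝ) :
    ∫⁻ y, ∫⁻ x in ball y r, f x ∂μ ∂μ = μ (ball 0 r) * ∫⁻ x, f x ∂μ := by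
  calc ∫⁻ y, ∫⁻ x in ball y r, f x ∂μ ∂μ = ∫⁻ y, ∫⁻ x, (ball y r).indicator f x ∂μ ∂μ := by
        simp_rw [lintegral_indicator measurableSet_ball]
    _ = ∫⁻ x, ∫⁻ y, (ball x r).indicator (fun _ => f x) y ∂μ ∂μ := by
        rw [lintegral_lintegral_swap (measurable_uncurry_indicator_ball hf r).aemeasurable]
        congr! 3 with x y
        simp only [indicator, mem_ball, dist_comm]
    _ = ∫⁻ x, μ (ball 0 r) * f x ∂μ := by
        simp_rw [lintegral_indicator_const measurableSet_ball, Measure.addHaar_ball_center,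
          mul_comm]
    _ = μ (ball 0 r) * ∫⁻ x, f x ∂μ := lintegral_const_mul _ hf

theorem exists_setLIntegral_ball_rpow_le {ι : Type*} [Fintype ι] (hι : 2 < Fintype.card ι)
    {q : ℝ≥0} (hq : (q : ℝ)⁻¹ = 2⁻¹ - (Fintype.card ι : ℝ)⁻¹) {p : ℝ} (hp : 2 < p)
    (hpq : p < q) {ρ : ℝ} (hρ : 0 < ρ) {α : ℝ} (hα : 0 ≤ α) (hαq : α ≤ (q - p) / (q - 2))
    (hαp : α ≤ p / 2 - 1) :
    ∃ C : ℝ≥0∞, C ≠ ∞ ∧ ∀ w : EuclideanSpace ℝ ι → ℝ, Differentiable ℝ w → ∀ c (s E : ℝ≥0∞),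
      ∫⁻ x in ball c ρ, ‖w x‖ₑ ^ 2 ≤ s → ∫⁻ x, h1Density w x ≤ E →
      ∫⁻ x in ball c ρ, ‖w x‖ₑ ^ p ≤
        C * s ^ α * E ^ (p / 2 - α - 1) * ∫⁻ x in ball c (3 * ρ), h1Density w x := by
  obtain ⟨C, hC, hsob⟩ := exists_setLIntegral_ball_rpow_le_h1Density hι hq hρ
  have hq2 : 0 < (q : ℝ) - 2 := by linarith
  set a := ((q : ℝ) - p) / (q - 2)
  set b := (p - 2) / ((q : ℝ) - 2)
  have hb : 0 ≤ b := div_nonneg (by linarith) hq2.le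
  have hab : 2 * a + q * b = p := by
    simp only [a, b]
    field_simp
    ring
  refine ⟨C ^ b, by finiteness, fun w hw c s E hs hE => ?_⟩
  set X := ∫⁻ x in ball c ρ, ‖w x‖ₑ ^ 2
  set A := ∫⁻ x in ball c (3 * ρ), h1Density w x
  have hXA : X ≤ A :=
    (lintegral_mono fun x => le_add_self).trans
      (lintegral_mono_set (ball_subset_ball (by linarith)))
  have hAE : A ≤ E := (setLIntegral_le_lintegral _ _).trans hE
  calc ∫⁻ x in ball c ρ, ‖w x‖ₑ ^ p
      ≤ X ^ a * (∫⁻ x in ball c ρ, ‖w x‖ₑ ^ (q : ℝ)) ^ b := by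
        simpa only [ENNReal.rpow_two] using lintegral_rpow_le_interpolate
          (μ := volume.restrict (ball c ρ)) hw.continuous.enorm.measurable.aemeasurable
          zero_le_two hp.le hpq.le (hp.trans hpq)
    _ = X ^ α * X ^ (a - α) * (∫⁻ x in ball c ρ, ‖w x‖ₑ ^ (q : ℝ)) ^ b := by
        rw [← ENNReal.rpow_add_of_nonneg _ _ hα (sub_nonneg.2 hαq), add_sub_cancel]
    _ ≤ X ^ α * A ^ (a - α) * (C * A ^ ((q : ℝ) / 2)) ^ b := by
        gcongr
        exact hsob w hw c
    _ = C ^ b * X ^ α * (A ^ (a - α) * A ^ ((q : ℝ) / 2 * b)) := by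
        rw [ENNReal.mul_rpow_of_nonneg _ _ hb, ← ENNReal.rpow_mul]
        ring
    _ = C ^ b * X ^ α * (A ^ (p / 2 - α - 1) * A ^ (1 : ℝ)) := by
        rw [← ENNReal.rpow_add_of_nonneg _ _ (by linarith) (by positivity),
          ← ENNReal.rpow_add_of_nonneg _ _ (by linarith) zero_le_one]
        congr 2
        linarith
    _ ≤ C ^ b * s ^ α * (E ^ (p / 2 - α - 1) * A) := by
        rw [ENNReal.rpow_one]
        gcongr
        linarith
    _ = C ^ b * s ^ α * E ^ (p / 2 - α - 1) * A := by ring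

theorem exists_lintegral_rpow_le {ι : Type*} [Fintype ι] (hι : 2 < Fintype.card ι) {p : ℝ}
    (hp : 2 < p) (hp' : p < 2 * Fintype.card ι / (Fintype.card ι - 2)) {ρ : ℝ} (hρ : 0 < ρ) :
    ∃ C : ℝ≥0∞, C ≠ ∞ ∧ ∃ α : ℝ, 0 < α ∧ α ≤ p / 2 - 1 ∧
      ∀ w : EuclideanSpace ℝ ι → ℝ, Differentiable ℝ w → ∀ s E : ℝ≥0∞,
      (∀ c, ∫⁻ x in ball c ρ, ‖w x‖ₑ ^ 2 ≤ s) → ∫⁻ x, h1Density w x ≤ E →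
      ∫⁻ x, ‖w x‖ₑ ^ p ≤ C * s ^ α * E ^ (p / 2 - α) := by
  have hn : (2 : ℝ) < Fintype.card ι := by exact_mod_cast hι
  set q : ℝ≥0 := ⟨2 * Fintype.card ι / (Fintype.card ι - 2), by apply div_nonneg <;> linarith⟩
  have hqn : (q : ℝ) = 2 * Fintype.card ι / (Fintype.card ι - 2) := rfl
  have hq : (q : ℝ)⁻¹ = 2⁻¹ - (Fintype.card ι : ℝ)⁻¹ := by
    rw [hqn]
    field_simp [show (Fintype.card ι : ℝ) - 2 ≠ 0 by linarith]
  have hpq : p < q := hqn ▸ hp'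
  set α := min (((q : ℝ) - p) / (q - 2)) (p / 2 - 1)
  have hα : 0 < α := lt_min (div_pos (by linarith) (by linarith)) (by linarith)
  have hαp : α ≤ p / 2 - 1 := min_le_right _ _
  obtain ⟨C, hC, hball⟩ := exists_setLIntegral_ball_rpow_le hι hq hp hpq hρ hα.le
    (min_le_left _ _) hαp
  set V := volume (ball (0 : EuclideanSpace ℝ ι) ρ)
  set V₃ := volume (ball (0 : EuclideanSpace ℝ ι) (3 * ρ))
  have hV : V ≠ 0 := (measure_ball_pos _ _ hρ).ne'
  have hV' : V ≠ ∞ := measure_ball_lt_top.ne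
  refine ⟨C * V₃ / V, by finiteness, α, hα, hαp, fun w hw s E hs hE => ?_⟩
  have hh1 := measurable_h1Density hw.continuous
  set K := C * s ^ α * E ^ (p / 2 - α - 1)
  have hsum : V * ∫⁻ x, ‖w x‖ₑ ^ p ≤ K * (V₃ * E) :=
    calc V * ∫⁻ x, ‖w x‖ₑ ^ p = ∫⁻ y, ∫⁻ x in ball y ρ, ‖w x‖ₑ ^ p :=
          (lintegral_setLIntegral_ball _ (hw.continuous.enorm.measurable.pow_const p) ρ).symm
      _ ≤ ∫⁻ y, K * ∫⁻ x in ball y (3 * ρ), h1Density w x :=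
          lintegral_mono fun y => hball w hw y s E (hs y) hE
      _ = K * (V₃ * ∫⁻ x, h1Density w x) := by
          rw [lintegral_const_mul _ (measurable_setLIntegral_ball _ hh1 _),
            lintegral_setLIntegral_ball _ hh1]
      _ ≤ K * (V₃ * E) := by gcongr
  have hEα : E ^ (p / 2 - α) = E ^ (p / 2 - α - 1) * E := by
    conv_lhs => rw [show p / 2 - α = (p / 2 - α - 1) + 1 by ring]
    rw [ENNReal.rpow_add_of_nonneg _ _ (by linarith) zero_le_one, ENNReal.rpow_one]
  calc ∫⁻ x, ‖w x‖ₑ ^ p = V * (∫⁻ x, ‖w x‖ₑ ^ p) / V := by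
        rw [mul_comm, ENNReal.mul_div_cancel_right hV hV']
    _ ≤ K * (V₃ * E) / V := by gcongr
    _ = C * V₃ / V * s ^ α * E ^ (p / 2 - α) := by
      rw [hEα, div_eq_mul_inv, div_eq_mul_inv]
      ring

theorem Real.enorm_sq_eq_ofReal (a : ℝ) : ‖a‖ₑ ^ 2 = ENNReal.ofReal (a ^ 2) := by
  rw [← ofReal_norm, ← ENNReal.ofReal_pow (norm_nonneg _), Real.norm_eq_abs, sq_abs]

theorem norm_gradient {E : Type*} [NormedAddCommGroup E] [InnerProductSpace ℝ E] [CompleteSpace E]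
    (w : E → ℝ) (x : E) : ‖gradient w x‖ = ‖fderiv ℝ w x‖ :=
  (InnerProductSpace.toDual ℝ E).symm.norm_map _

theorem gradient_const_mul {E : Type*} [NormedAddCommGroup E] [InnerProductSpace ℝ E]
    [CompleteSpace E] {w : E → ℝ} {x : E} (hw : DifferentiableAt ℝ w x) (c : ℝ) :
    gradient (fun y => c * w y) x = c • gradient w x := by
  rw [gradient, gradient, fderiv_const_mul hw, map_smul]

theorem lintegral_h1Density_eq_ofReal_integral {E : Type*} [NormedAddCommGroup E]
    [InnerProductSpace ℝ E] [CompleteSpace E] [MeasurableSpace E] {μ : Measure E} {w : E → ℝ}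
    (hw : MemLp w 2 μ) (hgrad : MemLp (fun x => gradient w x) 2 μ) :
    ∫⁻ x, h1Density w x ∂μ = ENNReal.ofReal (∫ x, ‖gradient w x‖ ^ 2 + w x ^ 2 ∂μ) := by
  have hint : Integrable (fun x => ‖gradient w x‖ ^ 2 + w x ^ 2) μ :=
    hgrad.norm.integrable_sq.add hw.integrable_sq
  rw [ofReal_integral_eq_lintegral_ofReal hint (ae_of_all _ fun x => by positivity)]
  congr with x
  rw [h1Density, ENNReal.ofReal_add (by positivity) (by positivity), norm_gradient,
    ← Real.enorm_sq_eq_ofReal, ← Real.enorm_sq_eq_ofReal, enorm_norm]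

theorem setLIntegral_ball_enorm_sq_le_ofReal_iSup {E : Type*} [PseudoMetricSpace E]
    [MeasurableSpace E] {μ : Measure E} {w : E → ℝ} (hw : MemLp w 2 μ) (y : E) (ρ : ℝ) :
    ∫⁻ x in ball y ρ, ‖w x‖ₑ ^ 2 ∂μ ≤ ENNReal.ofReal (⨆ z, ∫ x in ball z ρ, w x ^ 2 ∂μ) := by
  have hint := hw.integrable_sq
  simp_rw [Real.enorm_sq_eq_ofReal]
  rw [← ofReal_integral_eq_lintegral_ofReal hint.integrableOn (ae_of_all _ fun x => sq_nonneg _)]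
  refine ENNReal.ofReal_le_ofReal
    (le_ciSup (f := fun z => ∫ x in ball z ρ, w x ^ 2 ∂μ) ⟨∫ x, w x ^ 2 ∂μ, ?_⟩ y)
  rintro _ ⟨z, rfl⟩
  exact setIntegral_le_integral hint (ae_of_all _ fun x => sq_nonneg _)

theorem integrable_abs_rpow_of_lintegral_ne_top {α : Type*} [MeasurableSpace α] {μ : Measure α}
    {u : α → ℝ} (hu : AEStronglyMeasurable u μ) {p : ℝ} (hp : 0 ≤ p)
    (h : ∫⁻ x, ‖u x‖ₑ ^ p ∂μ ≠ ∞) : Integrable (fun x => |u x| ^ p) μ := by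
  refine ⟨(hu.aemeasurable.abs.pow_const p).aestronglyMeasurable, ?_⟩
  simpa [HasFiniteIntegral, Real.enorm_rpow_of_nonneg (abs_nonneg _) hp, lt_top_iff_ne_top]

theorem integral_abs_rpow_eq_toReal {α : Type*} [MeasurableSpace α] {μ : Measure α}
    {u : α → ℝ} (hu : AEStronglyMeasurable u μ) {p : ℝ} (hp : 0 ≤ p) :
    ∫ x, |u x| ^ p ∂μ = (∫⁻ x, ‖u x‖ₑ ^ p ∂μ).toReal := by
  have := integral_norm_eq_lintegral_enorm (hu.aemeasurable.abs.pow_const p).aestronglyMeasurable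
  simpa [Real.enorm_rpow_of_nonneg (abs_nonneg _) hp,
    abs_of_nonneg (Real.rpow_nonneg (abs_nonneg _) _)] using this

theorem setIntegral_mul_abs_rpow_le_of_energy_le {E : Type*} [NormedAddCommGroup E]
    [InnerProductSpace ℝ E] [CompleteSpace E] [MeasurableSpace E] {μ : Measure E} {K : E → ℝ}
    {s : Set E} {p ε : ℝ}
    (h : ∀ w : E → ℝ, Differentiable ℝ w → MemLp w 2 μ → MemLp (fun x => gradient w x) 2 μ →
      ∫ x, ‖gradient w x‖ ^ 2 + w x ^ 2 ∂μ ≤ 1 → ∫ x in s, K x * |w x| ^ p ∂μ ≤ ε)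
    {w : E → ℝ} (hw : Differentiable ℝ w) (hw2 : MemLp w 2 μ)
    (hgrad : MemLp (fun x => gradient w x) 2 μ) {B : ℝ} (hB : 0 < B)
    (hE : ∫ x, ‖gradient w x‖ ^ 2 + w x ^ 2 ∂μ ≤ B) :
    ∫ x in s, K x * |w x| ^ p ∂μ ≤ B ^ (p / 2) * ε := by
  set t := √B
  have ht : 0 < t := Real.sqrt_pos.2 hB
  have htB : t ^ 2 = B := Real.sq_sqrt hB.le
  have htp : t ^ p = B ^ (p / 2) := by
    rw [show t = B ^ (1 / 2 : ℝ) from Real.sqrt_eq_rpow B, ← Real.rpow_mul hB.le]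
    ring_nf
  have hgrad_t : ∀ x, gradient (fun y => t⁻¹ * w y) x = t⁻¹ • gradient w x :=
    fun x => gradient_const_mul (hw x) _
  have key := h (fun x => t⁻¹ * w x) (hw.const_mul _) (hw2.const_mul _)
    (by simp only [hgrad_t]; exact hgrad.const_smul t⁻¹) (by
      simp_rw [hgrad_t, norm_smul, mul_pow, Real.norm_eq_abs, sq_abs, ← mul_add]
      rw [integral_const_mul, inv_pow, htB, inv_mul_le_iff₀ hB, mul_one]
      exact hE)
  simp_rw [abs_mul, Real.mul_rpow (abs_nonneg _) (abs_nonneg _), abs_inv, abs_of_pos ht,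
    Real.inv_rpow ht.le, htp, mul_left_comm (K _), integral_const_mul] at key
  rwa [inv_mul_le_iff₀ (by positivity)] at key

theorem tendsto_integral_mul_of_tendsto_integral {E : Type*} [NormedAddCommGroup E]
    [MeasurableSpace E] [OpensMeasurableSpace E] {μ : Measure E} {K : E → ℝ} {g : ℕ → E → ℝ}
    (hK0 : ∀ x, 0 ≤ K x) (hKb : ∀ δ > (0 : ℝ), ∃ M : ℝ, ∀ x, δ ≤ ‖x‖ → K x ≤ M)
    (hg0 : ∀ n x, 0 ≤ g n x) (hgi : ∀ n, Integrable (g n) μ)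
    (hg : Tendsto (fun n => ∫ x, g n x ∂μ) atTop (𝓝 0))
    (hloc : ∀ ε > (0 : ℝ), ∃ δ > (0 : ℝ), ∀ n, ∫ x in {x | ‖x‖ ≤ δ}, K x * g n x ∂μ ≤ ε) :
    Tendsto (fun n => ∫ x, K x * g n x ∂μ) atTop (𝓝 0) := by
  refine tendsto_order.2 ⟨fun a ha => Eventually.of_forall fun n =>
    ha.trans_le (integral_nonneg fun x => mul_nonneg (hK0 x) (hg0 n x)), fun a ha => ?_⟩
  obtain ⟨δ, hδ, hnear⟩ := hloc (a / 2) (by positivity)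
  obtain ⟨M, hM⟩ := hKb δ hδ
  set M' := max M 0
  have hfar : ∀ᶠ n in atTop, ∫ x, g n x ∂μ < a / 2 / (M' + 1) :=
    (tendsto_order.1 hg).2 _ (by positivity)
  filter_upwards [hfar] with n hn
  by_cases hint : Integrable (fun x => K x * g n x) μ
  swap
  · rwa [integral_undef hint]
  have hS : MeasurableSet {x : E | ‖x‖ ≤ δ} := measurableSet_le measurable_norm measurable_const
  calc ∫ x, K x * g n x ∂μ
      = ∫ x in {x | ‖x‖ ≤ δ}, K x * g n x ∂μ + ∫ x in {x | ‖x‖ ≤ δ}ᶜ, K x * g n x ∂μ :=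
        (integral_add_compl hS hint).symm
    _ ≤ a / 2 + ∫ x in {x | ‖x‖ ≤ δ}ᶜ, M' * g n x ∂μ := by
        refine add_le_add (hnear n) (setIntegral_mono_on hint.integrableOn
          ((hgi n).const_mul _).integrableOn hS.compl fun x hx => ?_)
        exact mul_le_mul_of_nonneg_right
          ((hM x (not_le.1 (by simpa using hx)).le).trans (le_max_left _ _)) (hg0 n x)
    _ ≤ a / 2 + M' * ∫ x, g n x ∂μ := by
        rw [integral_const_mul]
        exact add_le_add_right (mul_le_mul_of_nonneg_left
          (setIntegral_le_integral (hgi n) (ae_of_all _ (hg0 n))) (le_max_right _ _)) _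
    _ < a := by
        have : M' * ∫ x, g n x ∂μ < a / 2 := by
          calc M' * ∫ x, g n x ∂μ ≤ M' * (a / 2 / (M' + 1)) := by gcongr
            _ < a / 2 := by
              rw [mul_div_assoc', div_lt_iff₀ (by positivity)]
              nlinarith [le_max_right M 0]
        linarith

theorem integrable_and_tendsto_integral_abs_rpow_of_vanishing {ι : Type*} [Fintype ι]
    (hι : 2 < Fintype.card ι) {p : ℝ} (hp : 2 < p)
    (hp' : p < 2 * Fintype.card ι / (Fintype.card ι - 2)) {ρ : ℝ} (hρ : 0 < ρ)
    {u : ℕ → EuclideanSpace ℝ ι → ℝ} (hdiff : ∀ n, Differentiable ℝ (u n))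
    (hu2 : ∀ n, MemLp (u n) 2) (hgrad : ∀ n, MemLp (fun x => gradient (u n) x) 2) {M : ℝ}
    (hbd : ∀ n, ∫ x, ‖gradient (u n) x‖ ^ 2 + u n x ^ 2 ≤ M)
    (hvanish : Tendsto (fun n => ⨆ y, ∫ x in ball y ρ, u n x ^ 2) atTop (𝓝 0)) :
    (∀ n, Integrable fun x => |u n x| ^ p) ∧ Tendsto (fun n => ∫ x, |u n x| ^ p) atTop (𝓝 0) := by
  obtain ⟨C, hC, α, hα, hαp, hlions⟩ := exists_lintegral_rpow_le hι hp hp' hρ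
  set b := fun n => C * ENNReal.ofReal (⨆ y, ∫ x in ball y ρ, u n x ^ 2) ^ α *
    ENNReal.ofReal M ^ (p / 2 - α)
  have hLp : ∀ n, ∫⁻ x, ‖u n x‖ₑ ^ p ≤ b n := fun n =>
    hlions (u n) (hdiff n) _ _ (setLIntegral_ball_enorm_sq_le_ofReal_iSup (hu2 n) · ρ)
      ((lintegral_h1Density_eq_ofReal_integral (hu2 n) (hgrad n)).trans_le
        (ENNReal.ofReal_le_ofReal (hbd n)))
  have hM : ENNReal.ofReal M ^ (p / 2 - α) ≠ ∞ :=
    ENNReal.rpow_ne_top_of_nonneg (by linarith) ENNReal.ofReal_ne_top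
  have hb_top : ∀ n, b n ≠ ∞ := fun n =>
    ENNReal.mul_ne_top (ENNReal.mul_ne_top hC
      (ENNReal.rpow_ne_top_of_nonneg hα.le ENNReal.ofReal_ne_top)) hM
  have hb : Tendsto b atTop (𝓝 0) := by
    have := ((ENNReal.continuous_rpow_const (y := α)).tendsto _).comp
      (ENNReal.tendsto_ofReal hvanish)
    simpa [hα] using ENNReal.Tendsto.mul_const (ENNReal.Tendsto.const_mul this (Or.inr hC))
      (Or.inr hM)
  have hp0 : 0 ≤ p := by linarith
  refine ⟨fun n => integrable_abs_rpow_of_lintegral_ne_top (hu2 n).1 hp0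
    (ne_top_of_le_ne_top (hb_top n) (hLp n)), ?_⟩
  simp_rw [integral_abs_rpow_eq_toReal (hu2 _).1 hp0]
  simpa [Function.comp_def] using (ENNReal.tendsto_toReal ENNReal.zero_ne_top).comp
    (tendsto_of_tendsto_of_tendsto_of_le_of_le tendsto_const_nhds hb (fun n => zero_le) hLp)

theorem weighted_lions_vanishing_general (N : ℕ) (hN : 3 ≤ N)
    (p : ℝ) (hp : 2 < p) (hp' : p < 2 * (N : ℝ) / ((N : ℝ) - 2)) (ρ : ℝ) (hρ : 0 < ρ)
    (Kst : EuclideanSpace ℝ (Fin N) → ℝ)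
    (hK0 : ∀ x, 0 ≤ Kst x)
    (hKb : ∀ δ > (0 : ℝ), ∃ M : ℝ, ∀ x : EuclideanSpace ℝ (Fin N), δ ≤ ‖x‖ → Kst x ≤ M)
    (hcpt : ∀ ε > (0 : ℝ), ∃ δ > (0 : ℝ), ∀ w : EuclideanSpace ℝ (Fin N) → ℝ,
      Differentiable ℝ w →
      MemLp w 2 (volume : Measure (EuclideanSpace ℝ (Fin N))) →
      MemLp (fun x => gradient w x) 2 (volume : Measure (EuclideanSpace ℝ (Fin N))) →
      (∫ x, ‖gradient w x‖ ^ 2 + (w x) ^ 2) ≤ 1 →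
      ∫ x in {x : EuclideanSpace ℝ (Fin N) | ‖x‖ ≤ δ}, Kst x * |w x| ^ p ≤ ε)
    (u : ℕ → EuclideanSpace ℝ (Fin N) → ℝ)
    (hdiff : ∀ n, Differentiable ℝ (u n))
    (hu2 : ∀ n, MemLp (u n) 2 (volume : Measure (EuclideanSpace ℝ (Fin N))))
    (hgrad : ∀ n, MemLp (fun x => gradient (u n) x) 2 (volume : Measure (EuclideanSpace ℝ (Fin N))))
    (M : ℝ) (hbd : ∀ n, (∫ x, ‖gradient (u n) x‖ ^ 2 + (u n x) ^ 2) ≤ M)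
    (hvanish : Tendsto
      (fun n => ⨆ y : EuclideanSpace ℝ (Fin N), ∫ x in Metric.ball y ρ, (u n x) ^ 2)
      atTop (𝓝 0)) :
    Tendsto (fun n => ∫ x, Kst x * |u n x| ^ p) atTop (𝓝 0) := by
  obtain ⟨hint, hlim⟩ := integrable_and_tendsto_integral_abs_rpow_of_vanishing (ι := Fin N)
    (by simp; omega) hp (by simpa using hp') hρ hdiff hu2 hgrad hbd hvanish
  refine tendsto_integral_mul_of_tendsto_integral hK0 hKb (fun n x => by positivity) hint hlim
    fun ε hε => ?_
  set B := max M 1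
  have hB : 0 < B := by positivity
  obtain ⟨δ, hδ, hsmall⟩ := hcpt (ε / B ^ (p / 2)) (by positivity)
  refine ⟨δ, hδ, fun n => ?_⟩
  calc _ ≤ B ^ (p / 2) * (ε / B ^ (p / 2)) :=
        setIntegral_mul_abs_rpow_le_of_energy_le hsmall (hdiff n) (hu2 n) (hgrad n)
          hB ((hbd n).trans (le_max_left _ _))
    _ = ε := mul_div_cancel₀ _ (by positivity)

/-- Weighted Lions vanishing lemma: if `{u_n}` is bounded in `H¹(ℝ^N)` and
`sup_{y} ∫_{B(y,ρ)} u_n² → 0`, then `∫ K_* |u_n|^p → 0`, for a weight `K_* ≥ 0` that is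
bounded outside every neighborhood of `0` and such that `v ↦ K_*^{1/p}v` is compact from
`H¹` into `L^p_loc` (encoded as uniform smallness of `∫_{|x|≤δ} K_* |w|^p`). -/
theorem weighted_lions_vanishing (N : ℕ) (hN : 3 ≤ N)
    (p : ℝ) (hp : 2 < p) (hp' : p < 2 * (N : ℝ) / ((N : ℝ) - 2)) (ρ : ℝ) (hρ : 0 < ρ)
    (Kst : EuclideanSpace ℝ (Fin N) → ℝ)
    (hK0 : ∀ x, 0 ≤ Kst x)
    (hKc : ContinuousOn Kst {(0 : EuclideanSpace ℝ (Fin N))}ᶜ)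
    (hKb : ∀ δ > (0 : ℝ), ∃ M : ℝ, ∀ x : EuclideanSpace ℝ (Fin N), δ ≤ ‖x‖ → Kst x ≤ M)
    (hcpt : ∀ ε > (0 : ℝ), ∃ δ > (0 : ℝ), ∀ w : EuclideanSpace ℝ (Fin N) → ℝ,
      Differentiable ℝ w →
      MemLp w 2 (volume : Measure (EuclideanSpace ℝ (Fin N))) →
      MemLp (fun x => gradient w x) 2 (volume : Measure (EuclideanSpace ℝ (Fin N))) →
      (∫ x, ‖gradient w x‖ ^ 2 + (w x) ^ 2) ≤ 1 →
      ∫ x in {x : EuclideanSpace ℝ (Fin N) | ‖x‖ ≤ δ}, Kst x * |w x| ^ p ≤ ε)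
    (u : ℕ → EuclideanSpace ℝ (Fin N) → ℝ)
    (hdiff : ∀ n, Differentiable ℝ (u n))
    (hu2 : ∀ n, MemLp (u n) 2 (volume : Measure (EuclideanSpace ℝ (Fin N))))
    (hgrad : ∀ n, MemLp (fun x => gradient (u n) x) 2 (volume : Measure (EuclideanSpace ℝ (Fin N))))
    (M : ℝ) (hbd : ∀ n, (∫ x, ‖gradient (u n) x‖ ^ 2 + (u n x) ^ 2) ≤ M)
    (hvanish : Tendsto
      (fun n => ⨆ y : EuclideanSpace ℝ (Fin N), ∫ x in Metric.ball y ρ, (u n x) ^ 2)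
      atTop (𝓝 0)) :
    Tendsto (fun n => ∫ x, Kst x * |u n x| ^ p) atTop (𝓝 0) :=
  weighted_lions_vanishing_general N hN p hp hp' ρ hρ Kst hK0 hKb hcpt u hdiff hu2 hgrad M hbd
    hvanish
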